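/- arXiv:0707.3504 — 5 statements merged into one kernel-verified Lean document; each statement's English description precedes it below -/
import Mathlib

section
/- Let D be a k×k real matrix with nonnegative off-diagonal entries, let f : [0,∞) → ℝ be continuous, and let u : [0,∞) → ℝ^k be differentiable and satisfy du_t/dt ≥ (D + f(t)·I) u_t componentwise for all t ≥ 0. Then for all t ≥ 0, u_t ≥ exp(tD + (∫₀ᵗ f(s) ds)·I) u_0 componentwise, where exp denotes the matrix exponential. -/
/-!
Fix a horizon `b` and set `z s = exp (∫ₛᵇ f) • exp ((b - s) D) u_s`. Then `z_b = u_b`,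
`z_a = exp ((b - a) D + (∫ₐᵇ f) I) u_a`, and
`z'_s = exp (∫ₛᵇ f) • exp ((b - s) D) (u'_s - D u_s - f(s) u_s)`, which is componentwise
nonnegative because the exponential of a Metzler matrix is entrywise nonnegative: after adding a
multiple `c I` the matrix becomes nonnegative, and `exp (D + c I) = e^c exp D`. Hence `z` is
monotone on `[a, b]`.
-/

open Filter Topology

theorem monotoneOn_pi_of_hasDerivAt_nonneg {ι : Type*} [Fintype ι] {D : Set ℝ}
    (hD : Convex ℝ D) {z z' : ℝ → ι → ℝ} (hz : ContinuousOn z D)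
    (hz' : ∀ t ∈ interior D, HasDerivAt z (z' t) t) (hz'₀ : ∀ t ∈ interior D, 0 ≤ z' t) :
    MonotoneOn z D := fun _ hs _ ht hst i =>
  monotoneOn_of_hasDerivWithinAt_nonneg hD
    ((continuousOn_apply i _).comp hz (Set.mapsTo_univ _ _))
    (fun t ht => (hasDerivAt_pi.1 (hz' t ht) i).hasDerivWithinAt) (fun t ht => hz'₀ t ht i)
    hs ht hst

namespace Matrix

variable {n : Type*}

def IsMetzler (A : Matrix n n ℝ) : Prop := ∀ i j, i ≠ j → 0 ≤ A i j

theorem IsMetzler.smul {A : Matrix n n ℝ} (hA : A.IsMetzler) {s : ℝ} (hs : 0 ≤ s) :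
    (s • A).IsMetzler := fun i j hij => mul_nonneg hs (hA i j hij)

variable [Fintype n]

theorem mulVec_nonneg {A : Matrix n n ℝ} (hA : ∀ i j, 0 ≤ A i j) {v : n → ℝ} (hv : 0 ≤ v) :
    0 ≤ A *ᵥ v := fun i => Finset.sum_nonneg fun j _ => mul_nonneg (hA i j) (hv j)

variable [DecidableEq n]

-- `NormedSpace.exp` does not depend on the norm; this one just makes `Matrix n n ℝ` a Banach algebra.
attribute [local instance] Matrix.linftyOpNormedRing Matrix.linftyOpNormedAlgebra

theorem exp_add_smul_one (A : Matrix n n ℝ) (c : ℝ) :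
    NormedSpace.exp (A + c • (1 : Matrix n n ℝ)) = Real.exp c • NormedSpace.exp A := by
  have hc : NormedSpace.exp (c • (1 : Matrix n n ℝ)) = Real.exp c • 1 := by
    rw [Real.exp_eq_exp_ℝ, ← Algebra.algebraMap_eq_smul_one, ← Algebra.algebraMap_eq_smul_one]
    exact (NormedSpace.map_exp (algebraMap ℝ (Matrix n n ℝ)) (continuous_algebraMap ℝ _) c).symm
  rw [exp_add_of_commute _ _ ((Commute.one_right A).smul_right c), hc, mul_smul_comm, mul_one]

theorem exp_apply_nonneg {A : Matrix n n ℝ} (hA : ∀ i j, 0 ≤ A i j) (i j : n) :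
    0 ≤ NormedSpace.exp A i j := by
  have h : HasSum (fun k : ℕ => ((k.factorial : ℝ)⁻¹ • A ^ k) i j) (NormedSpace.exp A i j) :=
    (NormedSpace.exp_series_hasSum_exp' (𝕂 := ℝ) A).map (entryLinearMap ℝ ℝ i j)
      (continuous_id.matrix_elem i j)
  exact h.nonneg fun k => mul_nonneg (by positivity) (pow_apply_nonneg hA k i j)

theorem IsMetzler.exists_add_smul_one_nonneg {A : Matrix n n ℝ} (hA : A.IsMetzler) :
    ∃ c : ℝ, ∀ i j, 0 ≤ (A + c • (1 : Matrix n n ℝ)) i j := by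
  refine ⟨∑ i, |A i i|, fun i j => ?_⟩
  rcases eq_or_ne i j with rfl | hij
  · have := Finset.single_le_sum (fun l _ => abs_nonneg (A l l)) (Finset.mem_univ i)
    simp only [add_apply, smul_apply, one_apply_eq, smul_eq_mul, mul_one]
    linarith [neg_abs_le (A i i)]
  · simpa [one_apply_ne hij] using hA i j hij

theorem IsMetzler.exp_apply_nonneg {A : Matrix n n ℝ} (hA : A.IsMetzler) (i j : n) :
    0 ≤ NormedSpace.exp A i j := by
  obtain ⟨c, hc⟩ := hA.exists_add_smul_one_nonneg
  have hexp : NormedSpace.exp A = Real.exp (-c) • NormedSpace.exp (A + c • 1) := by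
    rw [exp_add_smul_one, smul_smul, ← Real.exp_add, neg_add_cancel, Real.exp_zero, one_smul]
  rw [hexp]
  exact mul_nonneg (Real.exp_pos _).le (Matrix.exp_apply_nonneg hc i j)

theorem hasDerivAt_exp_sub_smul_mulVec (A : Matrix n n ℝ) (b : ℝ) {u : ℝ → n → ℝ}
    {u' : n → ℝ} {t : ℝ} (hu : HasDerivAt u u' t) :
    HasDerivAt (fun s => NormedSpace.exp ((b - s) • A) *ᵥ u s)
      (NormedSpace.exp ((b - t) • A) *ᵥ (u' - A *ᵥ u t)) t := by
  have hE : HasDerivAt (fun s => NormedSpace.exp ((b - s) • A))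
      (-(NormedSpace.exp ((b - t) • A) * A)) t := by
    have := (hasDerivAt_exp_smul_const A (b - t)).scomp t ((hasDerivAt_id t).const_sub b)
    rwa [neg_one_smul] at this
  refine ((mulVecBilin ℝ ℝ).toContinuousBilinearMap.hasDerivAt_of_bilinear
    (fun _ => hE) (fun _ => hu)).congr_deriv ?_
  simp only [LinearMap.toContinuousBilinearMap_apply, mulVecBilin_apply, neg_mulVec,
    ← mulVec_mulVec]
  rw [mulVec_sub, ← sub_eq_add_neg]

theorem IsMetzler.exp_mulVec_le {A : Matrix n n ℝ} (hA : A.IsMetzler) {f : ℝ → ℝ}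
    {u u' : ℝ → n → ℝ} {a b : ℝ} (hab : a ≤ b)
    (hf : ContinuousOn f (Set.Icc a b)) (hu : ContinuousOn u (Set.Icc a b))
    (hu' : ∀ t ∈ Set.Ioo a b, HasDerivAt u (u' t) t)
    (hineq : ∀ t ∈ Set.Ioo a b, A *ᵥ u t + f t • u t ≤ u' t) :
    NormedSpace.exp ((b - a) • A + (∫ s in a..b, f s) • (1 : Matrix n n ℝ)) *ᵥ u a ≤ u b := by
  set z : ℝ → n → ℝ := fun s =>
    Real.exp (∫ r in s..b, f r) • (NormedSpace.exp ((b - s) • A) *ᵥ u s)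
  have hf_int : MeasureTheory.IntegrableOn f (Set.uIcc a b) := by
    rw [Set.uIcc_of_le hab]
    exact hf.integrableOn_Icc
  have hz_cont : ContinuousOn z (Set.Icc a b) := by
    have hF := intervalIntegral.continuousOn_primitive_interval_left hf_int
    rw [Set.uIcc_of_le hab] at hF
    have hE : Continuous fun s : ℝ => NormedSpace.exp ((b - s) • A) :=
      NormedSpace.exp_continuous.comp (f := fun s : ℝ => (b - s) • A) (by fun_prop)
    exact (Real.continuous_exp.comp_continuousOn hF).smul
      ((continuous_fst.matrix_mulVec continuous_snd).comp_continuousOn (hE.continuousOn.prodMk hu))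
  have hz_deriv : ∀ t ∈ Set.Ioo a b, HasDerivAt z (Real.exp (∫ r in t..b, f r) •
      (NormedSpace.exp ((b - t) • A) *ᵥ (u' t - (A *ᵥ u t + f t • u t)))) t := by
    intro t ht
    have hF : HasDerivAt (fun s => ∫ r in s..b, f r) (-f t) t :=
      intervalIntegral.integral_hasDerivAt_left
        ((hf.mono (Set.Icc_subset_Icc_left ht.1.le)).intervalIntegrable_of_Icc ht.2.le)
        ((hf.mono Set.Ioo_subset_Icc_self).stronglyMeasurableAtFilter isOpen_Ioo t ht)
        (hf.continuousAt (Icc_mem_nhds ht.1 ht.2))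
    refine (hF.exp.smul (hasDerivAt_exp_sub_smul_mulVec A b (hu' t ht))).congr_deriv ?_
    simp only [mulVec_sub, mulVec_add, mulVec_smul]
    module
  have hz_mono : MonotoneOn z (Set.Icc a b) := by
    refine monotoneOn_pi_of_hasDerivAt_nonneg (convex_Icc a b) hz_cont
      (by simpa only [interior_Icc] using hz_deriv) ?_
    rw [interior_Icc]
    intro t ht
    exact smul_nonneg (Real.exp_pos _).le
      (mulVec_nonneg ((hA.smul (sub_nonneg.2 ht.2.le)).exp_apply_nonneg)
        (sub_nonneg.2 (hineq t ht)))
  simpa [z, exp_add_smul_one, smul_mulVec] using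
    hz_mono (Set.left_mem_Icc.2 hab) (Set.right_mem_Icc.2 hab) hab

end Matrix

theorem stmt0_general (k : ℕ) (D : Matrix (Fin k) (Fin k) ℝ)
    (hMetzler : ∀ i j : Fin k, i ≠ j → 0 ≤ D i j)
    (f : ℝ → ℝ) (hf : ContinuousOn f (Set.Ici (0 : ℝ)))
    (u u' : ℝ → Fin k → ℝ)
    (hderiv : ∀ t ∈ Set.Ici (0 : ℝ), HasDerivAt u (u' t) t)
    (hineq : ∀ t ∈ Set.Ici (0 : ℝ), ∀ i : Fin k,
      (D.mulVec (u t) + f t • u t) i ≤ u' t i) :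
    ∀ t ∈ Set.Ici (0 : ℝ), ∀ i : Fin k,
      ((NormedSpace.exp
          (t • D + (∫ s in (0 : ℝ)..t, f s) • (1 : Matrix (Fin k) (Fin k) ℝ))).mulVec
        (u 0)) i ≤ u t i := by
  intro t ht
  have hsub : Set.Icc 0 t ⊆ Set.Ici 0 := Set.Icc_subset_Ici_self
  have hsub' : Set.Ioo 0 t ⊆ Set.Ici 0 := Set.Ioo_subset_Icc_self.trans hsub
  have h := Matrix.IsMetzler.exp_mulVec_le (u' := u') hMetzler ht (hf.mono hsub)
    (fun s hs => (hderiv s (hsub hs)).continuousAt.continuousWithinAt)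
    (fun s hs => hderiv s (hsub' hs)) (fun s hs => hineq s (hsub' hs))
  rwa [sub_zero] at h

/-- Comparison lemma (Lemma 2.4 of the paper). If `D` is a `k × k`
Metzler matrix (nonnegative off-diagonal entries), `f : [0,∞) → ℝ` is continuous and
`u : [0,∞) → ℝ^k` is differentiable with `du_t/dt ≥ (D + f(t) I) u_t` componentwise
for all `t ≥ 0`, then `u_t ≥ exp (t D + (∫₀ᵗ f) I) u_0` componentwise for all `t ≥ 0`. -/
theorem stmt0 (k : ℕ) (hk : 1 ≤ k) (D : Matrix (Fin k) (Fin k) ℝ)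
    (hMetzler : ∀ i j : Fin k, i ≠ j → 0 ≤ D i j)
    (f : ℝ → ℝ) (hf : ContinuousOn f (Set.Ici (0 : ℝ)))
    (u u' : ℝ → Fin k → ℝ)
    (hderiv : ∀ t ∈ Set.Ici (0 : ℝ), HasDerivAt u (u' t) t)
    (hineq : ∀ t ∈ Set.Ici (0 : ℝ), ∀ i : Fin k,
      (D.mulVec (u t) + f t • u t) i ≤ u' t i) :
    ∀ t ∈ Set.Ici (0 : ℝ), ∀ i : Fin k,
      ((NormedSpace.exp
          (t • D + (∫ s in (0 : ℝ)..t, f s) • (1 : Matrix (Fin k) (Fin k) ℝ))).mulVec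
        (u 0)) i ≤ u t i :=
  stmt0_general k D hMetzler f hf u u' hderiv hineq
end

section
/- Let D be an irreducible k×k Metzler matrix and c > 0. Let u : [0,∞) → ℝ^k be a differentiable solution of the cumulant system du_t/dt = D u_t − (c/2) u_t ⊙ u_t with u_t ≥ 0 for all t ≥ 0 and initial condition u_0 = λ, where λ ∈ ℝ^k satisfies λ ≥ 0 and λ ≠ 0. Then for every t > 0 and every coordinate i ∈ {1,…,k}, u_{t,i} > 0. -/
open Filter Topology

/-- Auxiliary: forward propagation of positivity for one coordinate. -/
lemma aux_forward_pos {k : ℕ} {c : ℝ} (hc : 0 < c)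
    {D : Matrix (Fin k) (Fin k) ℝ}
    (hMetzler : ∀ i j : Fin k, i ≠ j → 0 ≤ D i j)
    {u : ℝ → Fin k → ℝ}
    (hsol : ∀ t ∈ Set.Ici (0 : ℝ),
      HasDerivAt u (D.mulVec (u t) - (c / 2) • (u t * u t)) t)
    (hnonneg : ∀ t ∈ Set.Ici (0 : ℝ), ∀ i : Fin k, 0 ≤ u t i)
    (i : Fin k) {s t : ℝ} (hs : 0 ≤ s) (hst : s ≤ t) (hpos : 0 < u s i) :
    0 < u t i := by
  -- coordinate derivative
  have hderiv : ∀ τ : ℝ, 0 ≤ τ →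
      HasDerivAt (fun τ => u τ i)
        ((D.mulVec (u τ) - (c / 2) • (u τ * u τ)) i) τ := by
    intro τ hτ
    exact hasDerivAt_pi.mp (hsol τ hτ) i
  have hcont : ContinuousOn (fun τ => u τ i) (Set.Icc s t) := by
    intro τ hτ
    exact ((hderiv τ (le_trans hs hτ.1)).continuousAt).continuousWithinAt
  obtain ⟨x0, hx0mem, hx0⟩ :=
    isCompact_Icc.exists_isMaxOn ⟨s, Set.left_mem_Icc.mpr hst⟩ hcont
  set B : ℝ := u x0 i with hB
  set C : ℝ := max 0 (c / 2 * B - D i i) with hCdef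
  have hC : c / 2 * B - D i i ≤ C := le_max_right _ _
  -- the function g
  set g : ℝ → ℝ := fun τ => u τ i * Real.exp (C * τ) with hg
  have hgd : ∀ τ : ℝ, 0 ≤ τ →
      HasDerivAt g
        ((D.mulVec (u τ) - (c / 2) • (u τ * u τ)) i * Real.exp (C * τ)
          + u τ i * (Real.exp (C * τ) * C)) τ := by
    intro τ hτ
    have he : HasDerivAt (fun τ : ℝ => Real.exp (C * τ)) (Real.exp (C * τ) * C) τ := by
      simpa using (((hasDerivAt_id τ).const_mul C).exp)
    exact (hderiv τ hτ).mul he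
  have hmono : MonotoneOn g (Set.Icc s t) := by
    apply monotoneOn_of_deriv_nonneg (convex_Icc s t)
    · exact hcont.mul ((Real.continuous_exp.comp (continuous_const.mul continuous_id)).continuousOn)
    · intro τ hτ
      rw [interior_Icc] at hτ
      exact ((hgd τ (le_trans hs hτ.1.le)).differentiableAt).differentiableWithinAt
    · intro τ hτ
      rw [interior_Icc] at hτ
      have hτ0 : 0 ≤ τ := le_trans hs hτ.1.le
      rw [(hgd τ hτ0).deriv]
      set w : ℝ := u τ i with hw
      have hw0 : 0 ≤ w := hnonneg τ hτ0 i
      have hwB : w ≤ B := hx0 (Set.Ioo_subset_Icc_self hτ)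
      have hval : (D.mulVec (u τ) - (c / 2) • (u τ * u τ)) i
          = (∑ m, D i m * u τ m) - c / 2 * (w * w) := by
        simp [Matrix.mulVec, dotProduct, Pi.sub_apply, Pi.smul_apply, Pi.mul_apply,
          smul_eq_mul, hw]
      have hsum : D i i * w ≤ ∑ m, D i m * u τ m := by
        have h1 : ∑ m, D i m * u τ m
            = D i i * u τ i + ∑ m ∈ Finset.univ.erase i, D i m * u τ m :=
          (Finset.add_sum_erase _ (fun m => D i m * u τ m) (Finset.mem_univ i)).symm
        have h2 : 0 ≤ ∑ m ∈ Finset.univ.erase i, D i m * u τ m := by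
          apply Finset.sum_nonneg
          intro m hm
          exact mul_nonneg (hMetzler i m (Ne.symm (Finset.ne_of_mem_erase hm)))
            (hnonneg τ hτ0 m)
        rw [h1]; rw [← hw]; linarith
      rw [hval]
      have hE : 0 < Real.exp (C * τ) := Real.exp_pos _
      have key : 0 ≤ (∑ m, D i m * u τ m) - c / 2 * (w * w) + w * C := by
        have h3 : 0 ≤ w * (C - (c / 2 * B - D i i)) :=
          mul_nonneg hw0 (sub_nonneg.2 hC)
        have h4 : 0 ≤ c / 2 * (w * (B - w)) :=
          mul_nonneg (by linarith) (mul_nonneg hw0 (sub_nonneg.2 hwB))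
        nlinarith [hsum]
      nlinarith [mul_nonneg key hE.le]
  have hle : g s ≤ g t :=
    hmono (Set.left_mem_Icc.mpr hst) (Set.right_mem_Icc.mpr hst) hst
  have h1 : 0 < g s := mul_pos hpos (Real.exp_pos _)
  have h2 : 0 < u t i * Real.exp (C * t) := lt_of_lt_of_le h1 hle
  nlinarith [Real.exp_pos (C * t)]

/-- (Lemma 2.3 (i) of the paper.) For an irreducible Metzler matrix `D`
and `c > 0`, any nonnegative solution of the cumulant system
`du_t/dt = D u_t − (c/2) u_t ⊙ u_t` starting from `λ ≥ 0`, `λ ≠ 0`, is strictly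
positive in every coordinate at every positive time. -/
theorem stmt1 (k : ℕ) (hk : 1 ≤ k) (c : ℝ) (hc : 0 < c)
    (D : Matrix (Fin k) (Fin k) ℝ)
    (hMetzler : ∀ i j : Fin k, i ≠ j → 0 ≤ D i j)
    (hirr : ∀ J : Finset (Fin k), J.Nonempty → J ≠ Finset.univ →
      ∃ j ∈ J, ∃ i ∉ J, 0 < D j i)
    (lam : Fin k → ℝ) (hlam : ∀ i, 0 ≤ lam i) (hlam0 : lam ≠ 0)
    (u : ℝ → Fin k → ℝ)
    (hsol : ∀ t ∈ Set.Ici (0 : ℝ),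
      HasDerivAt u (D.mulVec (u t) - (c / 2) • (u t * u t)) t)
    (hnonneg : ∀ t ∈ Set.Ici (0 : ℝ), ∀ i : Fin k, 0 ≤ u t i)
    (hinit : u 0 = lam) :
    ∀ t : ℝ, 0 < t → ∀ i : Fin k, 0 < u t i := by
  classical
  intro t ht i
  by_contra hcon
  have hti : u t i = 0 := le_antisymm (not_lt.mp hcon) (hnonneg t ht.le i)
  -- the zero set at time t
  set Z : Finset (Fin k) := Finset.univ.filter (fun m => u t m = 0) with hZ
  have hiZ : i ∈ Z := by simp [hZ, hti]
  -- an initially positive coordinate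
  obtain ⟨i0, hi0⟩ : ∃ i0, lam i0 ≠ 0 := Function.ne_iff.mp hlam0
  have hlam_pos : 0 < lam i0 := lt_of_le_of_ne (hlam i0) (Ne.symm hi0)
  have hu0 : 0 < u 0 i0 := by rw [hinit]; exact hlam_pos
  have huti0 : 0 < u t i0 :=
    aux_forward_pos hc hMetzler hsol hnonneg i0 le_rfl ht.le hu0
  have hnuniv : Z ≠ Finset.univ := by
    intro h
    have : i0 ∈ Z := h ▸ Finset.mem_univ i0
    rw [hZ, Finset.mem_filter] at this
    exact absurd this.2 (ne_of_gt huti0)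
  obtain ⟨j, hjZ, i', hi'Z, hDji'⟩ := hirr Z ⟨i, hiZ⟩ hnuniv
  have hutj : u t j = 0 := (Finset.mem_filter.mp hjZ).2
  have huti' : 0 < u t i' := by
    rcases lt_or_eq_of_le (hnonneg t ht.le i') with h | h
    · exact h
    · exact absurd (by simp [hZ, h.symm]) hi'Z
  -- u _ j vanishes on [0, t]
  have hzero : ∀ s ∈ Set.Icc (0 : ℝ) t, u s j = 0 := by
    intro s hsm
    by_contra h
    have hpos : 0 < u s j := lt_of_le_of_ne (hnonneg s hsm.1 j) (Ne.symm h)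
    have := aux_forward_pos hc hMetzler hsol hnonneg j hsm.1 hsm.2 hpos
    linarith [this, hutj.ge, this.ne']
  -- find s < t close to t with u s i' > 0 and 0 < s
  have hcont_i' : ContinuousAt (fun τ => u τ i') t :=
    (continuous_apply i').continuousAt.comp (hsol t ht.le).continuousAt
  have ev1 : ∀ᶠ τ in 𝓝 t, 0 < u τ i' :=
    hcont_i'.eventually (eventually_gt_nhds huti')
  have ev2 : ∀ᶠ τ in 𝓝 t, 0 < τ := eventually_gt_nhds ht
  have ev3 : ∀ᶠ τ in 𝓝[<] t, (0 < u τ i' ∧ 0 < τ) ∧ τ < t := by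
    refine (((ev1.and ev2).filter_mono nhdsWithin_le_nhds).and ?_)
    exact eventually_mem_nhdsWithin.mono (fun x hx => hx)
  obtain ⟨s, ⟨⟨hsu, hs0⟩, hst⟩⟩ := ev3.exists
  -- derivative of coordinate j at s
  have hdj : HasDerivAt (fun τ => u τ j)
      ((D.mulVec (u s) - (c / 2) • (u s * u s)) j) s :=
    hasDerivAt_pi.mp (hsol s hs0.le) j
  have hev : (fun τ => u τ j) =ᶠ[𝓝 s] (fun _ => (0 : ℝ)) := by
    filter_upwards [isOpen_Ioo.mem_nhds (⟨hs0, hst⟩ : s ∈ Set.Ioo 0 t)] with τ hτ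
    exact hzero τ (Set.Ioo_subset_Icc_self hτ)
  have hdj0 : HasDerivAt (fun _ : ℝ => (0 : ℝ))
      ((D.mulVec (u s) - (c / 2) • (u s * u s)) j) s :=
    hdj.congr_of_eventuallyEq hev.symm
  have huniq : (D.mulVec (u s) - (c / 2) • (u s * u s)) j = 0 :=
    hdj0.unique (hasDerivAt_const s 0)
  have husj : u s j = 0 := hzero s ⟨hs0.le, hst.le⟩
  have hval : (D.mulVec (u s) - (c / 2) • (u s * u s)) j
      = ∑ m, D j m * u s m := by
    simp [Matrix.mulVec, dotProduct, Pi.sub_apply, Pi.smul_apply, Pi.mul_apply,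
      smul_eq_mul, husj]
  have hsum_pos : 0 < ∑ m, D j m * u s m := by
    apply Finset.sum_pos'
    · intro m _
      by_cases hm : m = j
      · subst hm; rw [husj]; simp
      · exact mul_nonneg (hMetzler j m (Ne.symm hm)) (hnonneg s hs0.le m)
    · exact ⟨i', Finset.mem_univ i', mul_pos hDji' hsu⟩
  rw [hval] at huniq
  linarith
end

section
/- Let D be a k×k Metzler matrix, c > 0, μ ≤ 0, and ξ ∈ ℝ^k a positive right eigenvector of D with D ξ = μ ξ; set ξ̲ = min_i ξ_i. Let u : [0,∞) → ℝ^k be a nonnegative solution of the cumulant system with u_0 = λ ∈ ℝ^k, λ ≥ 0, and define C_t = max_{1≤i≤k} u_{t,i}/ξ_i. If μ = 0, then for all t ≥ 0, C_t ≤ C_0 / (1 + (c ξ̲ / 2) C_0 t), and consequently C_t ≤ 2 / (c ξ̲ t) for all t > 0. If μ < 0, then for all t ≥ 0, C_t ≤ C_0 e^{μ t} / (1 + (c ξ̲ / (2|μ|)) C_0 (1 − e^{μ t})), and consequently C_t ≤ 2|μ| e^{μ t} / (c ξ̲ (1 − e^{μ t})) for all t > 0. -/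
/-!
At an index `i` where `u_{t,i}/ξ_i` attains the maximum `C_t`, the Metzler property gives
`(D u_t)_i ≤ C_t (D ξ)_i = μ C_t ξ_i`, while `u_{t,i}² / ξ_i = C_t² ξ_i ≥ ξ̲ C_t²`. Hence the upper
right Dini derivative of `C` satisfies `C' ≤ μ C - (c ξ̲ / 2) C²`. The right-hand side is
decreasing on `[0, ∞)`, so a comparison argument bounds `C` by the solution of the logistic
equation `B' = μ B - (c ξ̲ / 2) B²` with `B 0 = C 0`, which is explicit.
-/

open Filter Topology Set Finset Real
open scoped Matrix

theorem eventually_slope_sup'_lt {ι : Type*} {s : Finset ι} (hs : s.Nonempty)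
    {g : ι → ℝ → ℝ} {g' : ι → ℝ} {x y r : ℝ}
    (hg : ∀ i ∈ s, HasDerivWithinAt (g i) (g' i) (Ici x) x)
    (hmax : ∀ i ∈ s, g i x = s.sup' hs (g · x) → g' i ≤ y) (hr : y < r) :
    ∀ᶠ z in 𝓝[>] x, slope (fun w => s.sup' hs (g · w)) x z < r := by
  have key : ∀ i ∈ s, ∀ᶠ z in 𝓝[>] x, g i z < s.sup' hs (g · x) + r * (z - x) := by
    intro i hi
    by_cases hact : g i x = s.sup' hs (g · x)
    · have hslope :=
        (hasDerivWithinAt_iff_tendsto_slope' Set.self_notMem_Ioi).1 (hg i hi).Ioi_of_Ici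
      filter_upwards [hslope.eventually_lt_const ((hmax i hi hact).trans_lt hr),
        self_mem_nhdsWithin] with z hz hxz
      rw [slope_def_field, div_lt_iff₀ (sub_pos.2 hxz)] at hz
      linarith
    · -- an inactive index stays below the maximum by continuity, whatever the sign of `r`
      have hline : Tendsto (fun z => s.sup' hs (g · x) + r * (z - x)) (𝓝[>] x)
          (𝓝 (s.sup' hs (g · x) + r * (x - x))) :=
        (Continuous.tendsto (by fun_prop) x).mono_left nhdsWithin_le_nhds
      refine ((hg i hi).continuousWithinAt.mono Ioi_subset_Ici_self).eventually_lt hline ?_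
      rw [sub_self, mul_zero, add_zero]
      exact lt_of_le_of_ne (s.le_sup' (g · x) hi) hact
  filter_upwards [s.eventually_all.2 key, self_mem_nhdsWithin] with z hz hxz
  rw [slope_def_field, div_lt_iff₀ (sub_pos.2 hxz), sub_lt_iff_lt_add', Finset.sup'_lt_iff]
  exact hz

theorem image_le_of_liminf_slope_right_le_of_antitoneOn {M B f : ℝ → ℝ} {a b : ℝ}
    (hf : AntitoneOn f (Ici 0)) (hM : ContinuousOn M (Icc a b))
    (hM' : ∀ x ∈ Ico a b, ∀ r, f (M x) < r → ∃ᶠ z in 𝓝[>] x, slope M x z < r)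
    (ha : M a ≤ B a) (hB : ContinuousOn B (Icc a b))
    (hB' : ∀ x ∈ Ico a b, HasDerivWithinAt B (f (B x)) (Ici x) x)
    (hB0 : ∀ x ∈ Ico a b, 0 ≤ B x) : ∀ ⦃x⦄, x ∈ Icc a b → M x ≤ B x := by
  intro x hx
  refine le_of_forall_pos_le_add fun δ hδ => ?_
  set ε := δ / exp x
  have hε : 0 < ε := by positivity
  -- compare with the strict supersolution `B + ε exp`
  have h := image_le_of_liminf_slope_right_lt_deriv_boundary' hM hM'
    (B := fun s => B s + ε * exp s) (B' := fun s => f (B s) + ε * exp s)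
    (by nlinarith [exp_pos a]) (hB.add (by fun_prop))
    (fun s hs => (hB' s hs).add ((hasDerivAt_exp s).const_mul ε).hasDerivWithinAt)
    (fun s hs hMs => ?_) hx
  · simpa [ε, div_mul_cancel₀ _ (exp_ne_zero x)] using h
  have hεs : 0 < ε * exp s := by positivity
  have hMB : B s ≤ M s := by linarith
  calc f (M s) ≤ f (B s) := hf (hB0 s hs) ((hB0 s hs).trans hMB) hMB
    _ < f (B s) + ε * exp s := by linarith

theorem Matrix.mulVec_apply_le_of_le_of_eq {ι R : Type*} [Fintype ι] [Semiring R] [PartialOrder R]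
    [IsOrderedRing R] {D : Matrix ι ι R} (hD : ∀ i j, i ≠ j → 0 ≤ D i j) {v w : ι → R}
    (hvw : v ≤ w) {i : ι} (hi : v i = w i) : (D *ᵥ v) i ≤ (D *ᵥ w) i := by
  refine Finset.sum_le_sum fun j _ => ?_
  rcases eq_or_ne i j with rfl | hij
  · rw [hi]
  · exact mul_le_mul_of_nonneg_left (hvw j) (hD i j hij)

theorem cumulant_field_apply_div_le {ι : Type*} [Fintype ι] {D : Matrix ι ι ℝ}
    (hD : ∀ i j, i ≠ j → 0 ≤ D i j) {μ c a : ℝ} {ξ : ι → ℝ} (hξ : ∀ i, 0 < ξ i)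
    (heig : D *ᵥ ξ = μ • ξ) {v : ι → ℝ} {C : ℝ} (hv : ∀ j, v j / ξ j ≤ C) {i : ι}
    (hi : v i / ξ i = C) (ha : a ≤ c / 2 * ξ i) :
    (D *ᵥ v - (c / 2) • (v * v)) i / ξ i ≤ μ * C - a * C ^ 2 := by
  have hvi : v i = C * ξ i := (div_eq_iff (hξ i).ne').1 hi
  have hlin : (D *ᵥ v) i ≤ C * μ * ξ i := by
    have hle : v ≤ C • ξ := fun j => (div_le_iff₀ (hξ j)).1 (hv j)
    calc (D *ᵥ v) i ≤ (D *ᵥ (C • ξ)) i := Matrix.mulVec_apply_le_of_le_of_eq hD hle (by simp [hvi])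
      _ = C * μ * ξ i := by simp [Matrix.mulVec_smul, heig]; ring
  rw [div_le_iff₀ (hξ i)]
  simp only [Pi.sub_apply, Pi.smul_apply, Pi.mul_apply, smul_eq_mul, hvi]
  nlinarith [mul_le_mul_of_nonneg_left ha (mul_nonneg (sq_nonneg C) (hξ i).le)]

theorem hasDerivAt_mul_exp_div_one_add {μ a b s : ℝ} {φ : ℝ → ℝ}
    (hφ : HasDerivAt φ (exp (μ * s)) s) (hden : 1 + a * b * φ s ≠ 0) :
    HasDerivAt (fun s => b * exp (μ * s) / (1 + a * b * φ s))
      (μ * (b * exp (μ * s) / (1 + a * b * φ s)) -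
        a * (b * exp (μ * s) / (1 + a * b * φ s)) ^ 2) s := by
  have hnum : HasDerivAt (fun s => b * exp (μ * s)) (b * (exp (μ * s) * μ)) s := by
    simpa using (((hasDerivAt_id s).const_mul μ).exp).const_mul b
  refine (hnum.fun_div ((hφ.const_mul (a * b)).const_add 1) hden).congr_deriv ?_
  field_simp

theorem mul_div_one_add_mul_le {b e x y : ℝ} (hb : 0 ≤ b) (he : 0 ≤ e) (hxy : 0 < x * y) :
    b * e / (1 + x * b * y) ≤ e / (x * y) := by
  rw [div_le_div_iff₀ (by nlinarith) hxy]
  nlinarith [mul_nonneg hb he]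

theorem hasDerivAt_one_sub_exp_div_neg {μ : ℝ} (hμ : μ ≠ 0) (s : ℝ) :
    HasDerivAt (fun s => (1 - exp (μ * s)) / -μ) (exp (μ * s)) s := by
  refine ((((hasDerivAt_id' s).const_mul μ).exp.const_sub 1).div_const (-μ)).congr_deriv ?_
  field_simp [hμ]

section maxRatio

variable {ι : Type*} [Fintype ι] [Nonempty ι]

/-- `C_t` of the paper is `maxRatio (u t) ξ`. -/
noncomputable def maxRatio (v ξ : ι → ℝ) : ℝ :=
  univ.sup' univ_nonempty fun i => v i / ξ i

theorem div_le_maxRatio (v ξ : ι → ℝ) (i : ι) : v i / ξ i ≤ maxRatio v ξ :=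
  univ.le_sup' (fun i => v i / ξ i) (mem_univ i)

theorem maxRatio_nonneg {v ξ : ι → ℝ} (hv : ∀ i, 0 ≤ v i) (hξ : ∀ i, 0 ≤ ξ i) :
    0 ≤ maxRatio v ξ :=
  (div_nonneg (hv _) (hξ _)).trans (div_le_maxRatio v ξ (Classical.arbitrary ι))

variable {D : Matrix ι ι ℝ} {μ c a : ℝ} {ξ : ι → ℝ} {u : ℝ → ι → ℝ}

theorem maxRatio_le_of_hasDerivAt_cumulant (hD : ∀ i j, i ≠ j → 0 ≤ D i j) (hμ : μ ≤ 0)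
    (ha0 : 0 ≤ a) (hξ : ∀ i, 0 < ξ i) (heig : D *ᵥ ξ = μ • ξ) (ha : ∀ i, a ≤ c / 2 * ξ i)
    (hu : ∀ t ∈ Ici (0 : ℝ), HasDerivAt u (D *ᵥ u t - (c / 2) • (u t * u t)) t)
    {B : ℝ → ℝ} (hB : ∀ t ∈ Ici (0 : ℝ), HasDerivAt B (μ * B t - a * B t ^ 2) t)
    (hB0 : ∀ t ∈ Ici (0 : ℝ), 0 ≤ B t) (h0 : maxRatio (u 0) ξ ≤ B 0) {t : ℝ} (ht : 0 ≤ t) :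
    maxRatio (u t) ξ ≤ B t := by
  have hf : AntitoneOn (fun y => μ * y - a * y ^ 2) (Ici 0) := fun y hy z _ hyz => by
    simp only [Set.mem_Ici] at hy
    nlinarith [mul_le_mul_of_nonneg_left hyz ha0]
  have hg : ∀ x ∈ Ici (0 : ℝ), ∀ i, HasDerivAt (fun s => u s i / ξ i)
      ((D *ᵥ u x - (c / 2) • (u x * u x)) i / ξ i) x := fun x hx i =>
    (hasDerivAt_pi.1 (hu x hx) i).div_const (ξ i)
  refine image_le_of_liminf_slope_right_le_of_antitoneOn (M := fun s => maxRatio (u s) ξ) hf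
    ?_ (fun x hx r hr => ?_) h0 (fun x hx => (hB x hx.1).continuousAt.continuousWithinAt)
    (fun x hx => (hB x hx.1).hasDerivWithinAt) (fun x hx => hB0 x hx.1) ⟨ht, le_rfl⟩
  · exact ContinuousOn.finset_sup'_apply _ fun i _ x hx =>
      (hg x hx.1 i).continuousAt.continuousWithinAt
  · refine (eventually_slope_sup'_lt univ_nonempty (fun i _ => (hg x hx.1 i).hasDerivWithinAt)
      (fun i _ hi => ?_) hr).frequently
    exact cumulant_field_apply_div_le hD hξ heig (div_le_maxRatio (u x) ξ) hi (ha i)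

/-- `φ t = t` gives the critical and `φ t = (1 - e^{μt}) / (-μ)` the subcritical bound. -/
theorem maxRatio_le_mul_exp_div_of_cumulant (hD : ∀ i j, i ≠ j → 0 ≤ D i j) (hμ : μ ≤ 0)
    (ha0 : 0 ≤ a) (hξ : ∀ i, 0 < ξ i) (heig : D *ᵥ ξ = μ • ξ) (ha : ∀ i, a ≤ c / 2 * ξ i)
    (hu : ∀ t ∈ Ici (0 : ℝ), HasDerivAt u (D *ᵥ u t - (c / 2) • (u t * u t)) t)
    (hu0 : ∀ i, 0 ≤ u 0 i) {φ : ℝ → ℝ} (hφ : ∀ s, HasDerivAt φ (exp (μ * s)) s) (hφ0 : φ 0 = 0)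
    (hφnn : ∀ s ≥ 0, 0 ≤ φ s) {t : ℝ} (ht : 0 ≤ t) :
    maxRatio (u t) ξ ≤
      maxRatio (u 0) ξ * exp (μ * t) / (1 + a * maxRatio (u 0) ξ * φ t) := by
  have hM0 := maxRatio_nonneg hu0 fun i => (hξ i).le
  have hden : ∀ s ≥ 0, 0 < 1 + a * maxRatio (u 0) ξ * φ s := fun s hs => by
    have := hφnn s hs
    positivity
  refine maxRatio_le_of_hasDerivAt_cumulant hD hμ ha0 hξ heig ha hu
    (fun s hs => hasDerivAt_mul_exp_div_one_add (hφ s) (hden s hs).ne')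
    (fun s hs => div_nonneg (by positivity) (hden s hs).le) ?_ ht
  simp [hφ0]

end maxRatio

theorem stmt2_general (k : ℕ) (hk : 1 ≤ k) (c : ℝ) (hc : 0 < c)
    (D : Matrix (Fin k) (Fin k) ℝ)
    (hMetzler : ∀ i j : Fin k, i ≠ j → 0 ≤ D i j)
    (μ : ℝ) (hμ : μ ≤ 0) (ξ : Fin k → ℝ) (hξpos : ∀ i, 0 < ξ i)
    (heig : D.mulVec ξ = μ • ξ)
    (u : ℝ → Fin k → ℝ)
    (hsol : ∀ t ∈ Set.Ici (0 : ℝ),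
      HasDerivAt u (D.mulVec (u t) - (c / 2) • (u t * u t)) t)
    (hnonneg : ∀ t ∈ Set.Ici (0 : ℝ), ∀ i : Fin k, 0 ≤ u t i)
    (C : ℝ → ℝ) (hC : ∀ t, C t = ⨆ i, u t i / ξ i)
    (ξmin : ℝ) (hξmin : ξmin = ⨅ i, ξ i) :
    (μ = 0 →
      (∀ t ≥ (0 : ℝ), C t ≤ C 0 / (1 + c * ξmin / 2 * C 0 * t)) ∧
      (∀ t > (0 : ℝ), C t ≤ 2 / (c * ξmin * t))) ∧
    (μ < 0 →
      (∀ t ≥ (0 : ℝ), C t ≤ C 0 * Real.exp (μ * t) /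
        (1 + c * ξmin / (2 * |μ|) * C 0 * (1 - Real.exp (μ * t)))) ∧
      (∀ t > (0 : ℝ), C t ≤ 2 * |μ| * Real.exp (μ * t) /
        (c * ξmin * (1 - Real.exp (μ * t))))) := by
  have : Nonempty (Fin k) := ⟨⟨0, hk⟩⟩
  have hCmax : ∀ t, C t = maxRatio (u t) ξ := fun t => (hC t).trans (sup'_univ_eq_ciSup _).symm
  have hξmin_pos : 0 < ξmin := by
    obtain ⟨i, hi⟩ := exists_eq_ciInf_of_finite (f := ξ)
    exact hξmin ▸ hi ▸ hξpos i
  have hξmin_le : ∀ i, c * ξmin / 2 ≤ c / 2 * ξ i := fun i => by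
    have := hξmin ▸ ciInf_le (Set.finite_range ξ).bddBelow i
    nlinarith
  have hC0 : 0 ≤ C 0 := hCmax 0 ▸ maxRatio_nonneg (hnonneg 0 self_mem_Ici) fun i => (hξpos i).le
  have barrier : ∀ φ : ℝ → ℝ, (∀ s, HasDerivAt φ (exp (μ * s)) s) → φ 0 = 0 →
      (∀ s ≥ 0, 0 ≤ φ s) → ∀ t ≥ 0, C t ≤ C 0 * exp (μ * t) / (1 + c * ξmin / 2 * C 0 * φ t) :=
    fun φ hφ hφ0 hφnn t ht => by
      simpa only [hCmax] using maxRatio_le_mul_exp_div_of_cumulant hMetzler hμ (by positivity)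
        hξpos heig hξmin_le hsol (hnonneg 0 self_mem_Ici) hφ hφ0 hφnn ht
  refine ⟨fun hμ0 => ?_, fun hμneg => ?_⟩
  · subst hμ0
    have h : ∀ t ≥ 0, C t ≤ C 0 / (1 + c * ξmin / 2 * C 0 * t) := fun t ht => by
      simpa using barrier id (by simpa using hasDerivAt_id) rfl (fun s hs => hs) t ht
    refine ⟨h, fun t ht => (h t ht.le).trans ?_⟩
    calc C 0 / (1 + c * ξmin / 2 * C 0 * t) = C 0 * 1 / (1 + c * ξmin / 2 * C 0 * t) := by ring
      _ ≤ 1 / (c * ξmin / 2 * t) := mul_div_one_add_mul_le hC0 zero_le_one (by positivity)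
      _ = 2 / (c * ξmin * t) := by ring
  · rw [abs_of_neg hμneg]
    have h : ∀ t ≥ 0, C t ≤ C 0 * exp (μ * t) /
        (1 + c * ξmin / (2 * -μ) * C 0 * (1 - exp (μ * t))) := fun t ht => by
      convert barrier _ (hasDerivAt_one_sub_exp_div_neg hμneg.ne) (by simp) (fun s hs =>
        div_nonneg (sub_nonneg.2 (exp_le_one_iff.2 (mul_nonpos_of_nonpos_of_nonneg hμ hs)))
          (neg_nonneg.2 hμ)) t ht using 3
      ring
    refine ⟨h, fun t ht => (h t ht.le).trans ?_⟩
    have he : 0 < 1 - exp (μ * t) := sub_pos.2 (exp_lt_one_iff.2 (mul_neg_of_neg_of_pos hμneg ht))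
    calc _ ≤ exp (μ * t) / (c * ξmin / (2 * -μ) * (1 - exp (μ * t))) :=
          mul_div_one_add_mul_le hC0 (exp_pos _).le (by have := neg_pos.2 hμneg; positivity)
      _ = 2 * -μ * exp (μ * t) / (c * ξmin * (1 - exp (μ * t))) := by field_simp

/-- (Lemma 2.3 (ii) of the paper.) Upper bounds on
`C_t = max_i u_{t,i}/ξ_i` for a nonnegative solution of the cumulant system,
in the critical (`μ = 0`) and subcritical (`μ < 0`) cases. Here `ξ̲ = min_i ξ_i`. -/
theorem stmt2 (k : ℕ) (hk : 1 ≤ k) (c : ℝ) (hc : 0 < c)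
    (D : Matrix (Fin k) (Fin k) ℝ)
    (hMetzler : ∀ i j : Fin k, i ≠ j → 0 ≤ D i j)
    (μ : ℝ) (hμ : μ ≤ 0) (ξ : Fin k → ℝ) (hξpos : ∀ i, 0 < ξ i)
    (heig : D.mulVec ξ = μ • ξ)
    (lam : Fin k → ℝ) (hlam : ∀ i, 0 ≤ lam i)
    (u : ℝ → Fin k → ℝ)
    (hsol : ∀ t ∈ Set.Ici (0 : ℝ),
      HasDerivAt u (D.mulVec (u t) - (c / 2) • (u t * u t)) t)
    (hnonneg : ∀ t ∈ Set.Ici (0 : ℝ), ∀ i : Fin k, 0 ≤ u t i)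
    (hinit : u 0 = lam)
    (C : ℝ → ℝ) (hC : ∀ t, C t = ⨆ i, u t i / ξ i)
    (ξmin : ℝ) (hξmin : ξmin = ⨅ i, ξ i) :
    (μ = 0 →
      (∀ t ≥ (0 : ℝ), C t ≤ C 0 / (1 + c * ξmin / 2 * C 0 * t)) ∧
      (∀ t > (0 : ℝ), C t ≤ 2 / (c * ξmin * t))) ∧
    (μ < 0 →
      (∀ t ≥ (0 : ℝ), C t ≤ C 0 * Real.exp (μ * t) /
        (1 + c * ξmin / (2 * |μ|) * C 0 * (1 - Real.exp (μ * t)))) ∧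
      (∀ t > (0 : ℝ), C t ≤ 2 * |μ| * Real.exp (μ * t) /
        (c * ξmin * (1 - Real.exp (μ * t))))) :=
  stmt2_general k hk c hc D hMetzler μ hμ ξ hξpos heig u hsol hnonneg C hC ξmin hξmin
end

section
/- Let D be a k×k Metzler matrix, c > 0, μ ≤ 0, and ξ ∈ ℝ^k a positive right eigenvector of D with D ξ = μ ξ; set ξ̄ = max_i ξ_i. Let u : [0,∞) → ℝ^k be a nonnegative solution of the cumulant system with u_0 = λ ∈ ℝ^k, λ ≥ 0, and define B_t = min_{1≤i≤k} u_{t,i}/ξ_i. If μ = 0, then for all t ≥ 0, B_t ≥ B_0 / (1 + (c ξ̄ / 2) B_0 t). If μ < 0, then for all t ≥ 0, B_t ≥ B_0 e^{μ t} / (1 + (c ξ̄ / (2|μ|)) B_0 (1 − e^{μ t})). -/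
/-!
Write `B_t = min_i u_{t,i}/ξ_i` and `q = c ξ̄ / 2`. If `i` attains the minimum at time `t`, then
`u_t ≥ B_t ξ` with equality in coordinate `i`, so the Metzler property and `Dξ = μξ` give
`(D u_t)_i ≥ μ B_t ξ_i`; together with `u_{t,i}^2 = B_t^2 ξ_i^2 ≤ ξ̄ B_t^2 ξ_i` this shows that the
right lower Dini derivative of `B` is at least `μ B - q B^2`. As `y ↦ μ y - q y^2` is
nonincreasing on `[0, ∞)`, a fencing argument keeps `B` above the solution of the scalar equation
`b' = μ b - q b^2`, `b 0 = B_0`, which is the explicit right-hand side.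
-/

open Filter Topology Set
open scoped Matrix

theorem eventually_exists_eq_ciInf_of_tendsto {α ι β : Type*} [Finite ι] [Nonempty ι]
    [ConditionallyCompleteLinearOrder β] [TopologicalSpace β] [OrderClosedTopology β]
    {l : Filter α} {f : α → ι → β} {a : ι → β} (hf : Tendsto f l (𝓝 a)) :
    ∀ᶠ z in l, ∃ i, a i = ⨅ j, a j ∧ f z i = ⨅ j, f z j := by
  obtain ⟨i₀, hi₀⟩ := exists_eq_ciInf_of_finite (f := a)
  have hsep : ∀ᶠ z in l, ∀ j, a j = ⨅ j, a j ∨ f z i₀ < f z j := by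
    refine eventually_all.2 fun j => ?_
    rcases (ciInf_le (finite_range a).bddBelow j).eq_or_lt with h | h
    · exact Eventually.of_forall fun _ => Or.inl h.symm
    · rw [← hi₀] at h
      exact ((tendsto_pi_nhds.1 hf i₀).eventually_lt (tendsto_pi_nhds.1 hf j) h).mono
        fun _ => Or.inr
  filter_upwards [hsep] with z hz
  obtain ⟨i, hi⟩ := exists_eq_ciInf_of_finite (f := f z)
  refine ⟨i, (hz i).resolve_right fun h => ?_, hi⟩
  exact (hi ▸ ciInf_le (finite_range _).bddBelow i₀).not_gt h

theorem ContinuousOn.ciInf_apply {X ι : Type*} [TopologicalSpace X] [Fintype ι] [Nonempty ι]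
    {f : X → ι → ℝ} {s : Set X} (hf : ContinuousOn f s) :
    ContinuousOn (fun x => ⨅ i, f x i) s := by
  simpa only [← Finset.inf'_univ_eq_ciInf] using
    ContinuousOn.finset_inf'_apply Finset.univ_nonempty fun i _ => continuousOn_pi.1 hf i

theorem HasDerivWithinAt.eventually_lt_slope_ciInf {ι : Type*} [Fintype ι] [Nonempty ι]
    {f : ℝ → ι → ℝ} {f' : ι → ℝ} {x r : ℝ} (hf : HasDerivWithinAt f f' (Ici x) x)
    (hr : ∀ i, f x i = ⨅ j, f x j → r < f' i) :
    ∀ᶠ z in 𝓝[>] x, r < slope (fun t => ⨅ i, f t i) x z := by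
  have hslope : Tendsto (slope f x) (𝓝[>] x) (𝓝 f') :=
    (hasDerivWithinAt_iff_tendsto_slope' (lt_irrefl x)).1 hf.Ioi_of_Ici
  have hcont : Tendsto f (𝓝[>] x) (𝓝 (f x)) :=
    hf.continuousWithinAt.mono Ioi_subset_Ici_self
  have hactive : ∀ᶠ z in 𝓝[>] x, ∀ i, f x i = ⨅ j, f x j → r < slope f x z i :=
    eventually_all.2 fun i => eventually_imp_distrib_left.2 fun hi =>
      (tendsto_pi_nhds.1 hslope i).eventually (lt_mem_nhds (hr i hi))
  filter_upwards [eventually_exists_eq_ciInf_of_tendsto hcont, hactive]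
    with z ⟨i, hix, hiz⟩ hz
  convert hz i hix using 1
  simp only [slope_def_module, Pi.smul_apply, Pi.sub_apply, hix, hiz]

theorem Matrix.mulVec_apply_le_of_metzler {ι : Type*} [Fintype ι] {D : Matrix ι ι ℝ}
    (hD : ∀ i j, i ≠ j → 0 ≤ D i j) {v w : ι → ℝ} (hvw : v ≤ w) {i : ι} (hi : v i = w i) :
    (D *ᵥ v) i ≤ (D *ᵥ w) i := by
  simp only [Matrix.mulVec, dotProduct]
  refine Finset.sum_le_sum fun j _ => ?_
  rcases eq_or_ne i j with rfl | hij
  · rw [hi]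
  · exact mul_le_mul_of_nonneg_left (hvw j) (hD i j hij)

theorem le_of_hasDerivAt_of_eventually_lt_slope {F b m : ℝ → ℝ} {a : ℝ}
    (hF : AntitoneOn F (Ici 0)) (hb : ∀ x ≥ a, HasDerivAt b (F (b x)) x)
    (hm : ContinuousOn m (Ici a)) (hm_nonneg : ∀ x ≥ a, 0 ≤ m x)
    (hm' : ∀ x ≥ a, ∀ r < F (m x), ∀ᶠ z in 𝓝[>] x, r < slope m x z) (ha : b a ≤ m a) :
    ∀ t ≥ a, b t ≤ m t := by
  intro t ht
  suffices h : ∀ ε > 0, b t - m t ≤ ε * (t - a + 1) by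
    have hT : 0 < t - a + 1 := by linarith
    refine sub_nonpos.1 (le_of_forall_pos_le_add fun δ hδ => ?_)
    simpa [div_mul_cancel₀ _ hT.ne'] using h (δ / (t - a + 1)) (by positivity)
  intro ε hε
  refine image_le_of_liminf_slope_right_lt_deriv_boundary (f := fun x => b x - m x)
    (f' := fun x => F (b x) - F (m x)) (B := fun x => ε * (x - a + 1))
    (B' := fun _ => ε) ?_ ?_ (by simp; linarith) ?_ ?_ ⟨ht, le_rfl⟩
  · exact ContinuousOn.sub (fun x hx => (hb x hx.1).continuousAt.continuousWithinAt)
      (hm.mono Icc_subset_Ici_self)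
  · intro x hx r hr
    obtain ⟨δ, hδ, rfl⟩ : ∃ δ > 0, r = F (b x) - F (m x) + 2 * δ :=
      ⟨(r - (F (b x) - F (m x))) / 2, by linarith, by ring⟩
    have hb_slope : ∀ᶠ z in 𝓝[>] x, slope b x z < F (b x) + δ :=
      ((hasDerivWithinAt_iff_tendsto_slope' (lt_irrefl x)).1
        (hb x hx.1).hasDerivWithinAt).eventually (gt_mem_nhds (by linarith))
    have hm_slope := hm' x hx.1 (F (m x) - δ) (by linarith)
    refine (hb_slope.and hm_slope).frequently.mono fun z ⟨hbz, hmz⟩ => ?_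
    have : slope (fun x => b x - m x) x z = slope b x z - slope m x z := by
      simp only [slope_def_field]; ring
    linarith
  · intro x
    simpa using ((hasDerivAt_id x).sub_const a |>.add_const 1).const_mul ε
  · intro x hx hx_eq
    have hmx := hm_nonneg x hx.1
    have hmb : m x ≤ b x := by nlinarith [hx.1]
    linarith [hF hmx (hmx.trans hmb) hmb]

theorem antitoneOn_mul_sub_mul_sq {μ q : ℝ} (hμ : μ ≤ 0) (hq : 0 ≤ q) :
    AntitoneOn (fun y => μ * y - q * y ^ 2) (Ici 0) := fun y hy z _ hyz => by
  nlinarith [mul_nonneg hq (mul_nonneg (sub_nonneg.2 hyz) (add_nonneg hy (le_trans hy hyz)))]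

theorem cumulant_eventually_lt_slope_ciInf_div {ι : Type*} [Fintype ι] [Nonempty ι]
    {c μ ξmax r x : ℝ} {D : Matrix ι ι ℝ} {ξ : ι → ℝ} {u : ℝ → ι → ℝ} (hc : 0 ≤ c)
    (hD : ∀ i j, i ≠ j → 0 ≤ D i j) (hξ : ∀ i, 0 < ξ i) (hξmax : ∀ i, ξ i ≤ ξmax)
    (heig : D *ᵥ ξ = μ • ξ) (hu : HasDerivAt u (D *ᵥ u x - (c / 2) • (u x * u x)) x)
    (hr : r < μ * (⨅ i, u x i / ξ i) - c * ξmax / 2 * (⨅ i, u x i / ξ i) ^ 2) :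
    ∀ᶠ z in 𝓝[>] x, r < slope (fun t => ⨅ i, u t i / ξ i) x z := by
  set β := ⨅ i, u x i / ξ i
  have hderiv : HasDerivWithinAt (fun t i => u t i / ξ i)
      (fun i => (D *ᵥ u x - (c / 2) • (u x * u x)) i / ξ i) (Ici x) x :=
    (hasDerivAt_pi.2 fun i => (hasDerivAt_pi.1 hu i).div_const (ξ i)).hasDerivWithinAt
  refine hderiv.eventually_lt_slope_ciInf fun i hi => hr.trans_le ?_
  have hui : u x i = β * ξ i := (div_eq_iff (hξ i).ne').1 hi
  have hβξ : β • ξ ≤ u x := fun j =>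
    (le_div_iff₀ (hξ j)).1 (ciInf_le (finite_range fun j => u x j / ξ j).bddBelow j)
  have hDu : β * (μ * ξ i) ≤ (D *ᵥ u x) i := by
    simpa [Matrix.mulVec_smul, heig] using
      Matrix.mulVec_apply_le_of_metzler hD hβξ (by simp [hui])
  rw [le_div_iff₀ (hξ i)]
  simp only [Pi.sub_apply, Pi.smul_apply, Pi.mul_apply, smul_eq_mul, hui]
  have hcβξ : 0 ≤ c * β ^ 2 * ξ i := mul_nonneg (mul_nonneg hc (sq_nonneg β)) (hξ i).le
  nlinarith [mul_le_mul_of_nonneg_left (hξmax i) hcβξ]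

theorem le_ciInf_div_of_cumulant {ι : Type*} [Fintype ι] [Nonempty ι]
    {c μ ξmax : ℝ} {D : Matrix ι ι ℝ} {ξ : ι → ℝ} {u : ℝ → ι → ℝ} {b : ℝ → ℝ} (hc : 0 ≤ c)
    (hμ : μ ≤ 0) (hD : ∀ i j, i ≠ j → 0 ≤ D i j) (hξ : ∀ i, 0 < ξ i)
    (hξmax : ∀ i, ξ i ≤ ξmax) (heig : D *ᵥ ξ = μ • ξ)
    (hu : ∀ t ≥ 0, HasDerivAt u (D *ᵥ u t - (c / 2) • (u t * u t)) t)
    (hu_nonneg : ∀ t ≥ 0, ∀ i, 0 ≤ u t i)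
    (hb : ∀ s ≥ 0, HasDerivAt b (μ * b s - c * ξmax / 2 * b s ^ 2) s)
    (h0 : b 0 ≤ ⨅ i, u 0 i / ξ i) :
    ∀ t ≥ 0, b t ≤ ⨅ i, u t i / ξ i := by
  obtain ⟨i₀⟩ := ‹Nonempty ι›
  have hq : 0 ≤ c * ξmax / 2 := by
    have := (hξ i₀).trans_le (hξmax i₀)
    positivity
  have hcont : ContinuousOn (fun t i => u t i / ξ i) (Ici 0) := continuousOn_pi.2 fun i =>
    ContinuousOn.div_const
      (fun t ht => (hasDerivAt_pi.1 (hu t ht) i).continuousAt.continuousWithinAt) _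
  exact le_of_hasDerivAt_of_eventually_lt_slope (antitoneOn_mul_sub_mul_sq hμ hq) hb
    hcont.ciInf_apply (fun t ht => le_ciInf fun i => div_nonneg (hu_nonneg t ht i) (hξ i).le)
    (fun x hx _ hr => cumulant_eventually_lt_slope_ciInf_div hc hD hξ hξmax heig (hu x hx) hr) h0

theorem hasDerivAt_div_one_add_mul (q β s : ℝ) (h : 1 + q * β * s ≠ 0) :
    HasDerivAt (fun s => β / (1 + q * β * s)) (-q * (β / (1 + q * β * s)) ^ 2) s := by
  have hd : HasDerivAt (fun s => 1 + q * β * s) (q * β) s := by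
    simpa using ((hasDerivAt_id s).const_mul (q * β)).const_add 1
  refine ((hasDerivAt_const s β).div hd h).congr_deriv ?_
  field_simp
  ring

theorem hasDerivAt_logistic (μ a β s : ℝ) (h : 1 + a * β * (1 - Real.exp (μ * s)) ≠ 0) :
    HasDerivAt (fun s => β * Real.exp (μ * s) / (1 + a * β * (1 - Real.exp (μ * s))))
      (μ * (β * Real.exp (μ * s) / (1 + a * β * (1 - Real.exp (μ * s)))) +
        μ * a * (β * Real.exp (μ * s) / (1 + a * β * (1 - Real.exp (μ * s)))) ^ 2) s := by
  have he : HasDerivAt (fun s => Real.exp (μ * s)) (Real.exp (μ * s) * μ) s := by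
    simpa using ((hasDerivAt_id s).const_mul μ).exp
  have hd := ((he.const_sub 1).const_mul (a * β)).const_add 1
  refine ((he.const_mul β).div hd h).congr_deriv ?_
  field_simp
  ring

theorem stmt3_general (k : ℕ) (hk : 1 ≤ k) (c : ℝ) (hc : 0 < c)
    (D : Matrix (Fin k) (Fin k) ℝ)
    (hMetzler : ∀ i j : Fin k, i ≠ j → 0 ≤ D i j)
    (μ : ℝ) (hμ : μ ≤ 0) (ξ : Fin k → ℝ) (hξpos : ∀ i, 0 < ξ i)
    (heig : D.mulVec ξ = μ • ξ)
    (u : ℝ → Fin k → ℝ)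
    (hsol : ∀ t ∈ Set.Ici (0 : ℝ),
      HasDerivAt u (D.mulVec (u t) - (c / 2) • (u t * u t)) t)
    (hnonneg : ∀ t ∈ Set.Ici (0 : ℝ), ∀ i : Fin k, 0 ≤ u t i)
    (B : ℝ → ℝ) (hB : ∀ t, B t = ⨅ i, u t i / ξ i)
    (ξmax : ℝ) (hξmax : ξmax = ⨆ i, ξ i) :
    (μ = 0 →
      ∀ t ≥ (0 : ℝ), B 0 / (1 + c * ξmax / 2 * B 0 * t) ≤ B t) ∧
    (μ < 0 →
      ∀ t ≥ (0 : ℝ), B 0 * Real.exp (μ * t) /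
        (1 + c * ξmax / (2 * |μ|) * B 0 * (1 - Real.exp (μ * t))) ≤ B t) := by
  have : Nonempty (Fin k) := ⟨⟨0, hk⟩⟩
  obtain rfl : B = fun t => ⨅ i, u t i / ξ i := funext hB
  have hξle : ∀ i, ξ i ≤ ξmax := fun i => hξmax ▸ le_ciSup (finite_range ξ).bddAbove i
  have hξmax_pos : 0 < ξmax := (hξpos ⟨0, hk⟩).trans_le (hξle _)
  have hB0 : 0 ≤ ⨅ i, u 0 i / ξ i :=
    le_ciInf fun i => div_nonneg (hnonneg 0 self_mem_Ici i) (hξpos i).le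
  have hcmp := fun b => le_ciInf_div_of_cumulant (b := b) hc.le hμ hMetzler hξpos hξle heig
    hsol hnonneg
  refine ⟨?_, fun hμneg => hcmp _ (fun s hs => ?_) (by simp)⟩
  · rintro rfl
    refine hcmp _ (fun s hs => ?_) (by simp)
    exact (hasDerivAt_div_one_add_mul _ _ s (by positivity)).congr_deriv (by ring)
  · have hexp : 0 ≤ 1 - Real.exp (μ * s) :=
      sub_nonneg.2 (Real.exp_le_one_iff.2 (mul_nonpos_of_nonpos_of_nonneg hμ hs))
    have hden : 0 < 1 + c * ξmax / (2 * |μ|) * (⨅ i, u 0 i / ξ i) * (1 - Real.exp (μ * s)) :=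
      add_pos_of_pos_of_nonneg one_pos (mul_nonneg (by positivity) hexp)
    refine (hasDerivAt_logistic μ _ _ s hden.ne').congr_deriv ?_
    rw [abs_of_neg hμneg]
    field_simp [hμneg.ne]
    ring

/-- (Lemma 2.3 (iii) of the paper.) Lower bounds on
`B_t = min_i u_{t,i}/ξ_i` for a nonnegative solution of the cumulant system,
in the critical (`μ = 0`) and subcritical (`μ < 0`) cases. Here `ξ̄ = max_i ξ_i`. -/
theorem stmt3 (k : ℕ) (hk : 1 ≤ k) (c : ℝ) (hc : 0 < c)
    (D : Matrix (Fin k) (Fin k) ℝ)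
    (hMetzler : ∀ i j : Fin k, i ≠ j → 0 ≤ D i j)
    (μ : ℝ) (hμ : μ ≤ 0) (ξ : Fin k → ℝ) (hξpos : ∀ i, 0 < ξ i)
    (heig : D.mulVec ξ = μ • ξ)
    (lam : Fin k → ℝ) (hlam : ∀ i, 0 ≤ lam i)
    (u : ℝ → Fin k → ℝ)
    (hsol : ∀ t ∈ Set.Ici (0 : ℝ),
      HasDerivAt u (D.mulVec (u t) - (c / 2) • (u t * u t)) t)
    (hnonneg : ∀ t ∈ Set.Ici (0 : ℝ), ∀ i : Fin k, 0 ≤ u t i)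
    (hinit : u 0 = lam)
    (B : ℝ → ℝ) (hB : ∀ t, B t = ⨅ i, u t i / ξ i)
    (ξmax : ℝ) (hξmax : ξmax = ⨆ i, ξ i) :
    (μ = 0 →
      ∀ t ≥ (0 : ℝ), B 0 / (1 + c * ξmax / 2 * B 0 * t) ≤ B t) ∧
    (μ < 0 →
      ∀ t ≥ (0 : ℝ), B 0 * Real.exp (μ * t) /
        (1 + c * ξmax / (2 * |μ|) * B 0 * (1 - Real.exp (μ * t))) ≤ B t) :=
  stmt3_general k hk c hc D hMetzler μ hμ ξ hξpos heig u hsol hnonneg B hB ξmax hξmax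
end

section
/- Let D be a k×k Metzler matrix, c > 0, μ ≤ 0, and ξ ∈ ℝ^k a positive right eigenvector of D with D ξ = μ ξ. Let u : [0,∞) → ℝ^k be a nonnegative solution of the cumulant system, and let v : [0,∞) → ℝ^k be a differentiable solution of the linearized system dv_t/dt = D v_t − c · u_t ⊙ v_t with v_0 = ξ. Then for all t ≥ 0, componentwise: exp(μ t − c ∫₀ᵗ max_i u_{s,i} ds) · ξ ≤ v_t ≤ exp(μ t − c ∫₀ᵗ min_i u_{s,i} ds) · ξ. -/
/-!
Write `e_ρ(t) = exp (μ t - c ∫₀ᵗ ρ) • ξ`. Because `D ξ = μ ξ`, the envelope `e_ρ` solves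
`e' = D e - c ρ e`, so against the linearized system `v' = D v - c u ⊙ v` it has the defect
`c (u - ρ) ⊙ e`, which is `≤ 0` for `ρ = max_i u_i` and `≥ 0` for `ρ = min_i u_i`. Both bounds
then follow from the comparison principle for `z' = D z - a ⊙ z` with `D` Metzler and `a ≥ 0`:
the off-diagonal entries of `D` are nonnegative, so at a point of the boundary of the
nonnegative orthant where `z_i = 0` the vector field does not point outwards.
-/

open Filter Topology Set Matrix

theorem eventually_nhdsGT_lt_of_hasDerivAt_pos {f : ℝ → ℝ} {f' x : ℝ} (hf : HasDerivAt f f' x)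
    (hf' : 0 < f') : ∀ᶠ y in 𝓝[>] x, f x < f y := by
  have hslope := (hasDerivAt_iff_tendsto_slope.mp hf).mono_left (nhdsGT_le_nhdsNE x)
  filter_upwards [hslope.eventually (eventually_gt_nhds hf'), self_mem_nhdsWithin]
    with y hy (hxy : x < y)
  rwa [slope_pos_iff hxy] at hy

theorem nonneg_of_hasDerivAt_pos_of_eq_zero {ι : Type*} [Fintype ι] {w w' : ℝ → ι → ℝ}
    (hw : ∀ t ≥ 0, HasDerivAt w (w' t) t) (h0 : 0 ≤ w 0)
    (hbdry : ∀ t ≥ 0, 0 ≤ w t → ∀ i, w t i = 0 → 0 < w' t i) :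
    ∀ t ≥ 0, 0 ≤ w t := by
  intro t ht
  have hclosed : IsClosed ({s | 0 ≤ w s} ∩ Icc 0 t) := by
    rw [inter_comm]
    exact ContinuousOn.preimage_isClosed_of_isClosed
      (fun s hs => (hw s hs.1).continuousAt.continuousWithinAt) isClosed_Icc isClosed_Ici
  refine hclosed.Icc_subset_of_forall_mem_nhdsWithin h0 ?_ ⟨ht, le_rfl⟩
  rintro s ⟨hs, hs0, -⟩
  have hwi (i : ι) : HasDerivAt (fun r => w r i) (w' s i) s := hasDerivAt_pi.1 (hw s hs0) i
  refine eventually_all.2 fun i => ?_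
  rcases (hs i).eq_or_lt with h | h
  · filter_upwards [eventually_nhdsGT_lt_of_hasDerivAt_pos (hwi i) (hbdry s hs0 hs i h.symm)]
      with r hr
    exact h.trans_le hr.le
  · filter_upwards [nhdsWithin_le_nhds ((hwi i).continuousAt.eventually (lt_mem_nhds h))]
      with r hr
    exact hr.le

def Matrix.IsMetzler_s8 {ι : Type*} (D : Matrix ι ι ℝ) : Prop := ∀ i j, i ≠ j → 0 ≤ D i j

namespace Matrix.IsMetzler_s8

variable {ι : Type*} [Fintype ι] {D : Matrix ι ι ℝ}

theorem mulVec_apply_nonneg (hD : D.IsMetzler_s8) {w : ι → ℝ} (hw : 0 ≤ w) {i : ι} (hi : w i = 0) :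
    0 ≤ (D *ᵥ w) i :=
  Finset.sum_nonneg fun j _ => by
    rcases eq_or_ne i j with rfl | hij
    · simp [hi]
    · exact mul_nonneg (hD i j hij) (hw j)

theorem nonneg_of_hasDerivAt (hD : D.IsMetzler_s8) {a z z' : ℝ → ι → ℝ} (ha : ∀ t ≥ 0, 0 ≤ a t)
    (hz : ∀ t ≥ 0, HasDerivAt z (z' t) t) (hsuper : ∀ t ≥ 0, D *ᵥ z t - a t * z t ≤ z' t)
    (h0 : 0 ≤ z 0) : ∀ t ≥ 0, 0 ≤ z t := by
  -- Adding `ε e^{l t} 𝟙`, with `l` above every row sum of `D`, makes the field point strictly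
  -- inwards on the boundary; then let `ε → 0`.
  obtain ⟨l, hl⟩ : ∃ l, ∀ i, (D *ᵥ 1) i < l := by
    obtain ⟨l, hl⟩ := (Set.finite_range (D *ᵥ 1)).bddAbove
    exact ⟨l + 1, fun i => (hl ⟨i, rfl⟩).trans_lt (lt_add_one l)⟩
  have hpert (ε : ℝ) (hε : 0 < ε) (t : ℝ) (ht : 0 ≤ t) :
      0 ≤ z t + (ε * Real.exp (l * t)) • (1 : ι → ℝ) := by
    have hp (t : ℝ) : HasDerivAt (fun s => (ε * Real.exp (l * s)) • (1 : ι → ℝ))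
        ((ε * (Real.exp (l * t) * (l * 1))) • 1) t :=
      (((hasDerivAt_id t).const_mul l).exp.const_mul ε).smul_const 1
    refine nonneg_of_hasDerivAt_pos_of_eq_zero (fun t ht => (hz t ht).add (hp t)) ?_ ?_ t ht
    · exact add_nonneg h0 (smul_nonneg (by positivity) zero_le_one)
    · intro t ht hw i hwi
      have hDw := hD.mulVec_apply_nonneg hw hwi
      simp only [Pi.add_apply, Pi.smul_apply, Pi.one_apply, smul_eq_mul, mul_one] at hwi ⊢
      simp only [mulVec_add, mulVec_smul, Pi.add_apply, Pi.smul_apply, smul_eq_mul] at hDw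
      have hsup := hsuper t ht i
      simp only [Pi.sub_apply, Pi.mul_apply] at hsup
      have he : 0 < ε * Real.exp (l * t) := by positivity
      nlinarith [mul_pos he (sub_pos.2 (hl i)), mul_nonneg (ha t ht i) he.le]
  intro t ht i
  refine le_of_forall_pos_le_add fun δ hδ => ?_
  have := hpert (δ / Real.exp (l * t)) (by positivity) t ht i
  simpa [div_mul_cancel₀ _ (Real.exp_pos _).ne', add_comm] using this

theorem le_of_hasDerivAt (hD : D.IsMetzler_s8) {a x x' y y' : ℝ → ι → ℝ} (ha : ∀ t ≥ 0, 0 ≤ a t)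
    (hx : ∀ t ≥ 0, HasDerivAt x (x' t) t) (hy : ∀ t ≥ 0, HasDerivAt y (y' t) t)
    (hxy : ∀ t ≥ 0, x' t - (D *ᵥ x t - a t * x t) ≤ y' t - (D *ᵥ y t - a t * y t))
    (h0 : x 0 ≤ y 0) : ∀ t ≥ 0, x t ≤ y t := by
  refine fun t ht => sub_nonneg.1 (hD.nonneg_of_hasDerivAt ha
    (fun t ht => (hy t ht).sub (hx t ht)) (fun t ht => ?_) (sub_nonneg.2 h0) t ht)
  intro i
  have := hxy t ht i
  simp only [Pi.sub_apply, mulVec_sub, Pi.mul_apply] at this ⊢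
  linarith

end Matrix.IsMetzler_s8

noncomputable def expIntegralSmul (μ c : ℝ) (ρ : ℝ → ℝ) {ι : Type*} (ξ : ι → ℝ) (t : ℝ) : ι → ℝ :=
  Real.exp (μ * t - c * ∫ s in (0 : ℝ)..t, ρ s) • ξ

section expIntegralSmul

variable {ι : Type*} {μ c : ℝ} {ρ : ℝ → ℝ} {ξ : ι → ℝ}

theorem hasDerivAt_expIntegralSmul [Fintype ι] (hρ : Continuous ρ) (t : ℝ) :
    HasDerivAt (expIntegralSmul μ c ρ ξ) ((μ - c * ρ t) • expIntegralSmul μ c ρ ξ t) t := by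
  have hexp : HasDerivAt (fun s => μ * s - c * ∫ r in (0 : ℝ)..s, ρ r) (μ - c * ρ t) t := by
    refine (((hasDerivAt_id' t).const_mul μ).sub
      ((hρ.integral_hasStrictDerivAt 0 t).hasDerivAt.const_mul c)).congr_deriv ?_
    ring
  unfold expIntegralSmul
  rw [smul_smul, mul_comm]
  exact hexp.exp.smul_const ξ

@[simp]
theorem expIntegralSmul_zero : expIntegralSmul μ c ρ ξ 0 = ξ := by
  simp [expIntegralSmul]

theorem mulVec_expIntegralSmul [Fintype ι] {D : Matrix ι ι ℝ} (heig : D *ᵥ ξ = μ • ξ) (t : ℝ) :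
    D *ᵥ expIntegralSmul μ c ρ ξ t = μ • expIntegralSmul μ c ρ ξ t := by
  rw [expIntegralSmul, Matrix.mulVec_smul, heig, smul_comm]

theorem expIntegralSmul_nonneg (hξ : 0 ≤ ξ) (t : ℝ) : 0 ≤ expIntegralSmul μ c ρ ξ t :=
  smul_nonneg (Real.exp_pos _).le hξ

theorem expIntegralSmul_le_of_hasDerivAt [Fintype ι] {D : Matrix ι ι ℝ} (hD : D.IsMetzler_s8)
    (heig : D *ᵥ ξ = μ • ξ) (hξ : 0 ≤ ξ) (hc : 0 ≤ c) {u v : ℝ → ι → ℝ} (hu : ∀ t ≥ 0, 0 ≤ u t)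
    (hρ : Continuous ρ) (hρu : ∀ t ≥ 0, ∀ i, u t i ≤ ρ t)
    (hv : ∀ t ≥ 0, HasDerivAt v (D *ᵥ v t - c • (u t * v t)) t) (hv0 : ξ ≤ v 0) :
    ∀ t ≥ 0, expIntegralSmul μ c ρ ξ t ≤ v t := by
  refine hD.le_of_hasDerivAt (a := fun t => c • u t) (fun t ht => smul_nonneg hc (hu t ht))
    (fun t _ => hasDerivAt_expIntegralSmul hρ t) hv (fun t ht i => ?_) (by simpa using hv0)
  have he := expIntegralSmul_nonneg (μ := μ) (c := c) (ρ := ρ) hξ t i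
  simp only [mulVec_expIntegralSmul heig, Pi.sub_apply, Pi.smul_apply, Pi.mul_apply, smul_eq_mul]
  nlinarith [mul_nonneg (mul_nonneg hc (sub_nonneg.2 (hρu t ht i))) he]

theorem le_expIntegralSmul_of_hasDerivAt [Fintype ι] {D : Matrix ι ι ℝ} (hD : D.IsMetzler_s8)
    (heig : D *ᵥ ξ = μ • ξ) (hξ : 0 ≤ ξ) (hc : 0 ≤ c) {u v : ℝ → ι → ℝ} (hu : ∀ t ≥ 0, 0 ≤ u t)
    (hρ : Continuous ρ) (hρu : ∀ t ≥ 0, ∀ i, ρ t ≤ u t i)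
    (hv : ∀ t ≥ 0, HasDerivAt v (D *ᵥ v t - c • (u t * v t)) t) (hv0 : v 0 ≤ ξ) :
    ∀ t ≥ 0, v t ≤ expIntegralSmul μ c ρ ξ t := by
  refine hD.le_of_hasDerivAt (a := fun t => c • u t) (fun t ht => smul_nonneg hc (hu t ht))
    hv (fun t _ => hasDerivAt_expIntegralSmul hρ t) (fun t ht i => ?_) (by simpa using hv0)
  have he := expIntegralSmul_nonneg (μ := μ) (c := c) (ρ := ρ) hξ t i
  simp only [mulVec_expIntegralSmul heig, Pi.sub_apply, Pi.smul_apply, Pi.mul_apply, smul_eq_mul]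
  nlinarith [mul_nonneg (mul_nonneg hc (sub_nonneg.2 (hρu t ht i))) he]

end expIntegralSmul

theorem continuous_ciSup_apply {ι X L : Type*} [Fintype ι] [Nonempty ι] [TopologicalSpace X]
    [ConditionallyCompleteLattice L] [TopologicalSpace L] [ContinuousSup L] {f : ι → X → L}
    (hf : ∀ i, Continuous (f i)) : Continuous fun x => ⨆ i, f i x := by
  simpa only [← Finset.sup'_univ_eq_ciSup] using
    Continuous.finset_sup'_apply Finset.univ_nonempty fun i _ => hf i

theorem continuous_ciInf_apply {ι X L : Type*} [Fintype ι] [Nonempty ι] [TopologicalSpace X]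
    [ConditionallyCompleteLattice L] [TopologicalSpace L] [ContinuousInf L] {f : ι → X → L}
    (hf : ∀ i, Continuous (f i)) : Continuous fun x => ⨅ i, f i x := by
  simpa only [← Finset.inf'_univ_eq_ciInf] using
    Continuous.finset_inf'_apply Finset.univ_nonempty fun i _ => hf i

theorem intervalIntegral.integral_comp_max_zero {E : Type*} [NormedAddCommGroup E]
    [NormedSpace ℝ E] (g : ℝ → E) {t : ℝ} (ht : 0 ≤ t) :
    ∫ s in (0 : ℝ)..t, g (max s 0) = ∫ s in (0 : ℝ)..t, g s :=
  integral_congr fun s hs => by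
    rw [uIcc_of_le ht] at hs
    simp only [max_eq_left hs.1]

theorem stmt8_general (k : ℕ) (c : ℝ) (hc : 0 < c)
    (D : Matrix (Fin k) (Fin k) ℝ)
    (hMetzler : ∀ i j : Fin k, i ≠ j → 0 ≤ D i j)
    (μ : ℝ) (ξ : Fin k → ℝ) (hξpos : ∀ i, 0 < ξ i)
    (heig : D.mulVec ξ = μ • ξ)
    (u : ℝ → Fin k → ℝ)
    (husol : ∀ t ∈ Set.Ici (0 : ℝ),
      HasDerivAt u (D.mulVec (u t) - (c / 2) • (u t * u t)) t)
    (hunonneg : ∀ t ∈ Set.Ici (0 : ℝ), ∀ i : Fin k, 0 ≤ u t i)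
    (v : ℝ → Fin k → ℝ)
    (hvsol : ∀ t ∈ Set.Ici (0 : ℝ),
      HasDerivAt v (D.mulVec (v t) - c • (u t * v t)) t)
    (hvinit : v 0 = ξ) :
    ∀ t ≥ (0 : ℝ), ∀ i : Fin k,
      Real.exp (μ * t - c * ∫ s in (0 : ℝ)..t, ⨆ j, u s j) * ξ i ≤ v t i ∧
      v t i ≤ Real.exp (μ * t - c * ∫ s in (0 : ℝ)..t, ⨅ j, u s j) * ξ i := by
  intro t ht i
  have : Nonempty (Fin k) := ⟨i⟩
  -- `u` is only controlled on `[0, ∞)`; freezing it on `(-∞, 0]` makes `max_j u_j` and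
  -- `min_j u_j` continuous, so that the fundamental theorem of calculus applies at `t = 0` too.
  have hu (j : Fin k) : Continuous fun s => u (max s 0) j :=
    (continuous_apply j).comp <| ContinuousOn.comp_continuous
      (fun s hs => (husol s hs).continuousAt.continuousWithinAt)
      (continuous_id.max continuous_const) fun s => le_max_right s 0
  have hξ : 0 ≤ ξ := fun j => (hξpos j).le
  have hlow := expIntegralSmul_le_of_hasDerivAt (μ := μ) hMetzler heig hξ hc.le hunonneg
    (continuous_ciSup_apply hu)
    (fun s hs j => by simpa [max_eq_left hs] using le_ciSup (Finite.bddAbove_range _) j)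
    hvsol hvinit.ge t ht i
  have hupp := le_expIntegralSmul_of_hasDerivAt (μ := μ) hMetzler heig hξ hc.le hunonneg
    (continuous_ciInf_apply hu)
    (fun s hs j => by simpa [max_eq_left hs] using ciInf_le (Finite.bddBelow_range _) j)
    hvsol hvinit.le t ht i
  simp only [expIntegralSmul, Pi.smul_apply, smul_eq_mul,
    intervalIntegral.integral_comp_max_zero (fun s => ⨆ j, u s j) ht,
    intervalIntegral.integral_comp_max_zero (fun s => ⨅ j, u s j) ht] at hlow hupp
  exact ⟨hlow, hupp⟩

/-- (Inequality (3.24) of the paper.) If `v` solves the linearized system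
`dv_t/dt = D v_t − c u_t ⊙ v_t` with `v_0 = ξ`, where `u` is a nonnegative solution of
the cumulant system and `D ξ = μ ξ` with `ξ > 0`, then componentwise for all `t ≥ 0`:
`exp(μt − c ∫₀ᵗ max_i u_{s,i} ds) ξ ≤ v_t ≤ exp(μt − c ∫₀ᵗ min_i u_{s,i} ds) ξ`. -/
theorem stmt8 (k : ℕ) (hk : 1 ≤ k) (c : ℝ) (hc : 0 < c)
    (D : Matrix (Fin k) (Fin k) ℝ)
    (hMetzler : ∀ i j : Fin k, i ≠ j → 0 ≤ D i j)
    (μ : ℝ) (hμ : μ ≤ 0) (ξ : Fin k → ℝ) (hξpos : ∀ i, 0 < ξ i)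
    (heig : D.mulVec ξ = μ • ξ)
    (u : ℝ → Fin k → ℝ)
    (husol : ∀ t ∈ Set.Ici (0 : ℝ),
      HasDerivAt u (D.mulVec (u t) - (c / 2) • (u t * u t)) t)
    (hunonneg : ∀ t ∈ Set.Ici (0 : ℝ), ∀ i : Fin k, 0 ≤ u t i)
    (v : ℝ → Fin k → ℝ)
    (hvsol : ∀ t ∈ Set.Ici (0 : ℝ),
      HasDerivAt v (D.mulVec (v t) - c • (u t * v t)) t)
    (hvinit : v 0 = ξ) :
    ∀ t ≥ (0 : ℝ), ∀ i : Fin k,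
      Real.exp (μ * t - c * ∫ s in (0 : ℝ)..t, ⨆ j, u s j) * ξ i ≤ v t i ∧
      v t i ≤ Real.exp (μ * t - c * ∫ s in (0 : ℝ)..t, ⨅ j, u s j) * ξ i :=
  stmt8_general k c hc D hMetzler μ ξ hξpos heig u husol hunonneg v hvsol hvinit
end
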